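/- arXiv:1305.5435 — 2 statements merged into one kernel-verified Lean document; each statement's English description precedes it below -/
import Mathlib

section
/- Let W(s) = (1/2)s²(1−s)². For every continuously differentiable function φ : ℝ → ℝ with lim_{t→−∞} φ(t) = 1 and lim_{t→+∞} φ(t) = 0, such that t ↦ (1/2)φ'(t)² + W(φ(t)) is integrable on ℝ, one has ∫_ℝ ((1/2)φ'(t)² + W(φ(t))) dt ≥ ∫₀¹ √(2W(s)) ds = 1/6. -/
open Filter Topology MeasureTheory Set

/-! The Modica–Mortola trick: by AM-GM, `(1/2)φ'² + W(φ) ≥ √(2W(φ)) |φ'|`, and the right-hand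
side integrates, after the substitution `s = φ(t)`, to at least `|∫_{φ(-T)}^{φ(T)} √(2W)|`.
Letting `T → ∞` the endpoints tend to the limits `1` and `0` of `φ`. -/

theorem sqrt_two_mul_mul_abs_le {w : ℝ} (hw : 0 ≤ w) (d : ℝ) :
    √(2 * w) * |d| ≤ 1 / 2 * d ^ 2 + w := by
  nlinarith [sq_nonneg (√(2 * w) - |d|), Real.sq_sqrt (by positivity : 0 ≤ 2 * w), sq_abs d]

theorem tendsto_intervalIntegral_of_tendsto {α : Type*} {l : Filter α} {g : ℝ → ℝ}
    (hg : Continuous g) {x y : α → ℝ} {a b : ℝ} (hx : Tendsto x l (𝓝 a))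
    (hy : Tendsto y l (𝓝 b)) :
    Tendsto (fun i => ∫ s in x i..y i, g s) l (𝓝 (∫ s in a..b, g s)) := by
  have hint : ∀ u v, IntervalIntegrable g volume u v := hg.intervalIntegrable
  have hprim : Continuous fun v => ∫ s in (0 : ℝ)..v, g s :=
    intervalIntegral.continuous_primitive hint 0
  have hsplit : ∀ u v, ∫ s in u..v, g s = (∫ s in (0 : ℝ)..v, g s) - ∫ s in (0 : ℝ)..u, g s :=
    fun u v => (intervalIntegral.integral_interval_sub_left (hint 0 v) (hint 0 u)).symm
  refine Tendsto.congr (fun i => (hsplit (x i) (y i)).symm) ?_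
  rw [hsplit a b]
  exact ((hprim.tendsto b).comp hy).sub ((hprim.tendsto a).comp hx)

section ModicaMortola

variable {W : ℝ → ℝ} {φ : ℝ → ℝ}

theorem abs_intervalIntegral_sqrt_le_integral_energy (hWc : Continuous W) (hW0 : ∀ s, 0 ≤ W s)
    (hφ : ContDiff ℝ 1 φ) (hint : Integrable fun t => 1 / 2 * deriv φ t ^ 2 + W (φ t))
    {a b : ℝ} (hab : a ≤ b) :
    |∫ s in φ a..φ b, √(2 * W s)| ≤ ∫ t, (1 / 2 * deriv φ t ^ 2 + W (φ t)) := by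
  have hsubst : ∫ t in a..b, √(2 * W (φ t)) * deriv φ t = ∫ s in φ a..φ b, √(2 * W s) :=
    intervalIntegral.integral_comp_mul_deriv
      (fun t _ => (hφ.differentiable one_ne_zero t).hasDerivAt)
      (hφ.continuous_deriv le_rfl).continuousOn
      (Real.continuous_sqrt.comp (continuous_const.mul hWc))
  rw [← hsubst]
  calc |∫ t in a..b, √(2 * W (φ t)) * deriv φ t|
      ≤ ∫ t in a..b, (1 / 2 * deriv φ t ^ 2 + W (φ t)) := by
        refine intervalIntegral.norm_integral_le_of_norm_le (E := ℝ) hab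
          (ae_of_all _ fun t _ => ?_) hint.intervalIntegrable
        rw [Real.norm_eq_abs, abs_mul, abs_of_nonneg (Real.sqrt_nonneg _)]
        exact sqrt_two_mul_mul_abs_le (hW0 _) _
    _ = ∫ t in Ioc a b, (1 / 2 * deriv φ t ^ 2 + W (φ t)) := intervalIntegral.integral_of_le hab
    _ ≤ ∫ t, (1 / 2 * deriv φ t ^ 2 + W (φ t)) :=
        setIntegral_le_integral hint (ae_of_all _ fun t => by have := hW0 (φ t); positivity)

theorem abs_intervalIntegral_sqrt_le_integral_energy_of_tendsto (hWc : Continuous W)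
    (hW0 : ∀ s, 0 ≤ W s) (hφ : ContDiff ℝ 1 φ)
    (hint : Integrable fun t => 1 / 2 * deriv φ t ^ 2 + W (φ t)) {a b : ℝ}
    (hbot : Tendsto φ atBot (𝓝 a)) (htop : Tendsto φ atTop (𝓝 b)) :
    |∫ s in a..b, √(2 * W s)| ≤ ∫ t, (1 / 2 * deriv φ t ^ 2 + W (φ t)) := by
  have hlim : Tendsto (fun T => |∫ s in φ (-T)..φ T, √(2 * W s)|) atTop
      (𝓝 |∫ s in a..b, √(2 * W s)|) :=
    (tendsto_intervalIntegral_of_tendsto (Real.continuous_sqrt.comp (continuous_const.mul hWc))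
      (hbot.comp tendsto_neg_atTop_atBot) htop).abs
  refine le_of_tendsto hlim (eventually_ge_atTop 0 |>.mono fun T hT => ?_)
  exact abs_intervalIntegral_sqrt_le_integral_energy hWc hW0 hφ hint (by linarith)

end ModicaMortola

theorem integral_sqrt_two_mul_doubleWell :
    ∫ s in (0 : ℝ)..1, √(2 * (1 / 2 * s ^ 2 * (1 - s) ^ 2)) = 1 / 6 := by
  have hsqrt : EqOn (fun s : ℝ => √(2 * (1 / 2 * s ^ 2 * (1 - s) ^ 2))) (fun s => s - s ^ 2)
      (uIcc 0 1) := by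
    intro s hs
    rw [uIcc_of_le zero_le_one] at hs
    dsimp only
    have : 2 * (1 / 2 * s ^ 2 * (1 - s) ^ 2) = (s - s ^ 2) ^ 2 := by ring
    rw [this, Real.sqrt_sq (by nlinarith [hs.1, hs.2])]
  rw [intervalIntegral.integral_congr hsqrt, intervalIntegral.integral_sub
    intervalIntegral.intervalIntegrable_id (intervalIntegral.intervalIntegrable_pow 2)]
  norm_num [integral_id, integral_pow]

/-- Modica–Mortola lower bound for the one-dimensional transversal energy: for every
`C¹` function `φ` connecting `1` at `−∞` to `0` at `+∞` with integrable energy density,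
`∫_ℝ ((1/2)φ'² + W(φ)) ≥ ∫₀¹ √(2W(s)) ds = 1/6`, where `W(s) = (1/2)s²(1−s)²`. -/
theorem transversal_energy_lower_bound (W : ℝ → ℝ)
    (hW : W = fun s => (1 / 2) * s ^ 2 * (1 - s) ^ 2)
    (φ : ℝ → ℝ) (hφ : ContDiff ℝ 1 φ)
    (hbot : Tendsto φ atBot (𝓝 1)) (htop : Tendsto φ atTop (𝓝 0))
    (hint : Integrable (fun t => (1 / 2) * (deriv φ t) ^ 2 + W (φ t))) :
    ((∫ t : ℝ, ((1 / 2) * (deriv φ t) ^ 2 + W (φ t))) ≥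
        ∫ s in (0 : ℝ)..1, Real.sqrt (2 * W s)) ∧
      (∫ s in (0 : ℝ)..1, Real.sqrt (2 * W s)) = 1 / 6 := by
  have hWc : Continuous W := hW ▸ by fun_prop
  have hW0 : ∀ s, 0 ≤ W s := fun s => hW ▸ by positivity
  have hbound := abs_intervalIntegral_sqrt_le_integral_energy_of_tendsto hWc hW0 hφ hint hbot htop
  rw [intervalIntegral.integral_symm, abs_neg] at hbound
  exact ⟨(le_abs_self _).trans hbound, hW ▸ integral_sqrt_two_mul_doubleWell⟩
end

section
/- Let W : ℝ → ℝ be three times continuously differentiable, let q : ℝ → ℝ be three times continuously differentiable with q''(z) = W'(q(z)) for all z (hence q''' = W''(q)q'), and let η₁ : ℝ → ℝ be three times continuously differentiable with η₁''(z) − W''(q(z))η₁(z) = z q'(z) for all z. Assume: q' is square-integrable; η₁''(z)q'(z) − η₁'(z)q''(z) → 0 and z q'(z)² → 0 as z → ±∞; and the functions W'''(q)η₁(q')², η₁'''q', η₁'q''', and (zq')'q' are integrable on ℝ. Then ∫_ℝ W'''(q(z)) η₁(z) q'(z)² dz = −(1/2) ∫_ℝ q'(z)² dz. -/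
/-!
The boundary term `η₁'' q' − η₁' q''` is the Wronskian of `η₁'` and `q'`. Differentiating it and
using `q''' = W''(q) q'` together with the derivative of the linearized equation, the `W''(q)`
terms cancel and its derivative is `W'''(q) η₁ q'² + (z q')' q'`. The Wronskian vanishes at
`±∞`, so `∫ W'''(q) η₁ q'² = −∫ (z q')' q'`, and since `(z q'²)' = 2 (z q')' q' − q'²` with
`z q'² → 0` at `±∞`, `∫ (z q')' q' = (1/2) ∫ q'²`.
-/

open Filter Topology MeasureTheory

theorem HasDerivAt.wronskian {𝕜 : Type*} [NontriviallyNormedField 𝕜] {u v u' v' : 𝕜 → 𝕜}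
    {u'' v'' x : 𝕜} (hu : HasDerivAt u (u' x) x) (hv : HasDerivAt v (v' x) x)
    (hu' : HasDerivAt u' u'' x) (hv' : HasDerivAt v' v'' x) :
    HasDerivAt (fun y => u' y * v y - u y * v' y) (u'' * v x - u x * v'') x :=
  ((hu'.mul hv).sub (hu.mul hv')).congr_deriv (by ring)

theorem integral_deriv_id_mul_mul_self {p : ℝ → ℝ} (hp : Differentiable ℝ p)
    (hsq : Integrable fun z => p z ^ 2)
    (hint : Integrable fun z => deriv (fun y => y * p y) z * p z)
    (hbot : Tendsto (fun z => z * p z ^ 2) atBot (𝓝 0))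
    (htop : Tendsto (fun z => z * p z ^ 2) atTop (𝓝 0)) :
    ∫ z, deriv (fun y => y * p y) z * p z = (1 / 2) * ∫ z, p z ^ 2 := by
  have hderiv : ∀ z, HasDerivAt (fun y => y * p y ^ 2)
      (2 * (deriv (fun y => y * p y) z * p z) - p z ^ 2) z := by
    intro z
    have hzp : deriv (fun y => y * p y) z = p z + z * deriv p z := by
      simpa using ((hasDerivAt_id' z).fun_mul (hp z).hasDerivAt).deriv
    rw [hzp]
    exact ((hasDerivAt_id' z).fun_mul ((hp z).hasDerivAt.pow 2)).congr_deriv (by norm_num; ring)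
  have hzero := integral_of_hasDerivAt_of_tendsto hderiv ((hint.const_mul 2).sub hsq) hbot htop
  rw [integral_sub (hint.const_mul 2) hsq, integral_const_mul] at hzero
  linarith

theorem wronskian_deriv_eq_of_linearized {W q η : ℝ → ℝ}
    (hW' : Differentiable ℝ (deriv W)) (hW'' : Differentiable ℝ (deriv (deriv W)))
    (hq : Differentiable ℝ q) (hq' : Differentiable ℝ (deriv q)) (hη : Differentiable ℝ η)
    (hqeq : ∀ z, deriv (deriv q) z = deriv W (q z))
    (hηeq : ∀ z, deriv (deriv η) z - deriv (deriv W) (q z) * η z = z * deriv q z) (z : ℝ) :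
    deriv (deriv (deriv η)) z * deriv q z - deriv η z * deriv (deriv (deriv q)) z =
      deriv (deriv (deriv W)) (q z) * η z * deriv q z ^ 2
        + deriv (fun y => y * deriv q y) z * deriv q z := by
  have hq''' : deriv (deriv (deriv q)) z = deriv (deriv W) (q z) * deriv q z := by
    rw [show deriv (deriv q) = fun z => deriv W (q z) from funext hqeq]
    exact ((hW' (q z)).hasDerivAt.comp z (hq z).hasDerivAt).deriv
  have hη''' : deriv (deriv (deriv η)) z =
      deriv (deriv (deriv W)) (q z) * deriv q z * η z + deriv (deriv W) (q z) * deriv η z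
        + deriv (fun y => y * deriv q y) z := by
    rw [show deriv (deriv η) = fun z => deriv (deriv W) (q z) * η z + z * deriv q z from
      funext fun z => by linarith [hηeq z]]
    exact ((((hW'' (q z)).hasDerivAt.comp z (hq z).hasDerivAt).mul (hη z).hasDerivAt).add
      (differentiableAt_id.mul (hq' z)).hasDerivAt).deriv
  rw [hη''', hq''']
  ring

theorem int_Wppp_eta1_general (W q η₁ : ℝ → ℝ)
    (hW : ContDiff ℝ 3 W) (hq : ContDiff ℝ 3 q)
    (hqeq : ∀ z : ℝ, deriv (deriv q) z = deriv W (q z))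
    (hη : ContDiff ℝ 3 η₁)
    (hηeq : ∀ z : ℝ, deriv (deriv η₁) z - deriv (deriv W) (q z) * η₁ z = z * deriv q z)
    (hsq : Integrable (fun z => (deriv q z) ^ 2))
    (hbtop : Tendsto (fun z => deriv (deriv η₁) z * deriv q z
      - deriv η₁ z * deriv (deriv q) z) atTop (𝓝 0))
    (hbbot : Tendsto (fun z => deriv (deriv η₁) z * deriv q z
      - deriv η₁ z * deriv (deriv q) z) atBot (𝓝 0))
    (hztop : Tendsto (fun z => z * (deriv q z) ^ 2) atTop (𝓝 0))
    (hzbot : Tendsto (fun z => z * (deriv q z) ^ 2) atBot (𝓝 0))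
    (hint₂ : Integrable (fun z => deriv (deriv (deriv η₁)) z * deriv q z))
    (hint₃ : Integrable (fun z => deriv η₁ z * deriv (deriv (deriv q)) z))
    (hint₄ : Integrable (fun z => deriv (fun y => y * deriv q y) z * deriv q z)) :
    (∫ z : ℝ, deriv (deriv (deriv W)) (q z) * η₁ z * (deriv q z) ^ 2) =
      -(1 / 2) * ∫ z : ℝ, (deriv q z) ^ 2 := by
  have hq' : Differentiable ℝ (deriv q) := (hq.of_le (by norm_num)).differentiable_deriv_two
  have hq'' : Differentiable ℝ (deriv (deriv q)) := (hq.deriv' (n := 2)).differentiable_deriv_two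
  have hη' : Differentiable ℝ (deriv η₁) := (hη.of_le (by norm_num)).differentiable_deriv_two
  have hη'' : Differentiable ℝ (deriv (deriv η₁)) := (hη.deriv' (n := 2)).differentiable_deriv_two
  have hwronskian : ∀ z, HasDerivAt
      (fun z => deriv (deriv η₁) z * deriv q z - deriv η₁ z * deriv (deriv q) z)
      (deriv (deriv (deriv η₁)) z * deriv q z - deriv η₁ z * deriv (deriv (deriv q)) z) z :=
    fun z => HasDerivAt.wronskian (hη' z).hasDerivAt (hq' z).hasDerivAt (hη'' z).hasDerivAt
      (hq'' z).hasDerivAt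
  have hsplit : ∀ z, deriv (deriv (deriv W)) (q z) * η₁ z * (deriv q z) ^ 2 =
      (deriv (deriv (deriv η₁)) z * deriv q z - deriv η₁ z * deriv (deriv (deriv q)) z)
        - deriv (fun y => y * deriv q y) z * deriv q z := fun z => by
    linarith [wronskian_deriv_eq_of_linearized ((hW.of_le (by norm_num)).differentiable_deriv_two)
      (hW.deriv' (n := 2)).differentiable_deriv_two (hq.differentiable (by norm_num)) hq'
      (hη.differentiable (by norm_num)) hqeq hηeq z]
  have hint_wronskian : Integrable fun z =>
      deriv (deriv (deriv η₁)) z * deriv q z - deriv η₁ z * deriv (deriv (deriv q)) z :=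
    hint₂.sub hint₃
  rw [funext hsplit, integral_sub hint_wronskian hint₄,
    integral_of_hasDerivAt_of_tendsto hwronskian hint_wronskian hbbot hbtop,
    integral_deriv_id_mul_mul_self hq' hsq hint₄ hzbot hztop]
  ring

/-- Key integral identity in the matched asymptotic expansions: if `q'' = W'(q)` and
`η₁'' − W''(q) η₁ = z q'` with the stated decay and integrability assumptions, then
`∫_ℝ W'''(q) η₁ q'² = −(1/2)∫_ℝ q'²`. -/
theorem int_Wppp_eta1 (W q η₁ : ℝ → ℝ)
    (hW : ContDiff ℝ 3 W) (hq : ContDiff ℝ 3 q)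
    (hqeq : ∀ z : ℝ, deriv (deriv q) z = deriv W (q z))
    (hη : ContDiff ℝ 3 η₁)
    (hηeq : ∀ z : ℝ, deriv (deriv η₁) z - deriv (deriv W) (q z) * η₁ z = z * deriv q z)
    (hsq : Integrable (fun z => (deriv q z) ^ 2))
    (hbtop : Tendsto (fun z => deriv (deriv η₁) z * deriv q z
      - deriv η₁ z * deriv (deriv q) z) atTop (𝓝 0))
    (hbbot : Tendsto (fun z => deriv (deriv η₁) z * deriv q z
      - deriv η₁ z * deriv (deriv q) z) atBot (𝓝 0))
    (hztop : Tendsto (fun z => z * (deriv q z) ^ 2) atTop (𝓝 0))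
    (hzbot : Tendsto (fun z => z * (deriv q z) ^ 2) atBot (𝓝 0))
    (hint₁ : Integrable (fun z => deriv (deriv (deriv W)) (q z) * η₁ z * (deriv q z) ^ 2))
    (hint₂ : Integrable (fun z => deriv (deriv (deriv η₁)) z * deriv q z))
    (hint₃ : Integrable (fun z => deriv η₁ z * deriv (deriv (deriv q)) z))
    (hint₄ : Integrable (fun z => deriv (fun y => y * deriv q y) z * deriv q z)) :
    (∫ z : ℝ, deriv (deriv (deriv W)) (q z) * η₁ z * (deriv q z) ^ 2) =
      -(1 / 2) * ∫ z : ℝ, (deriv q z) ^ 2 :=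
  int_Wppp_eta1_general W q η₁ hW hq hqeq hη hηeq hsq hbtop hbbot hztop hzbot hint₂ hint₃ hint₄
end
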